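/- arXiv:1008.0780 — 2 statements merged into one kernel-verified Lean document; each statement's English description precedes it below -/
import Mathlib

section
/- Let A_1, A_2, A_3, A_4 be 4×4 upper triangular Toeplitz complex matrices with nonzero diagonal entries a_{j,1}. The 4-tuple (A_1, A_2, A_3, A_4) is hypercyclic on ℂ⁴ if and only if the set of vectors (Σ_{j=1}^4 k_j(a_{j,4}/a_{j,1} − a_{j,2}a_{j,3}/a_{j,1}² + (1/3)a_{j,2}³/a_{j,1}³), Σ_{j=1}^4 k_j(a_{j,3}/a_{j,1} − (1/2)a_{j,2}²/a_{j,1}²), Σ_{j=1}^4 k_j a_{j,2}/a_{j,1}, a_{1,1}^{k_1}a_{2,1}^{k_2}a_{3,1}^{k_3}a_{4,1}^{k_4}) over all k_1,k_2,k_3,k_4 ∈ ℕ is dense in ℂ⁴. -/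
/-!
An upper triangular Toeplitz matrix with nonzero diagonal is `l • exp (t₁ N + t₂ N² + t₃ N³)`
for the nilpotent shift `N`, and such matrices multiply by multiplying the `l` and adding the
`tᵢ`. So the products `A₁^k₁ ⋯ A₄^k₄` are exactly the matrices whose coordinates
`(t₃, t₂, t₁, l)` run through the set on the right-hand side.

Since these matrices commute, `T x = X (T e₄)`, where `X` is the Toeplitz matrix with last
column `x`. If `x₄ = 0` the orbit lies in the hyperplane `y₄ = 0`; otherwise `X` is invertible,
and `T ↦ T e₄` is, in the coordinates `(t₃, t₂, t₁, l)`, a homeomorphism between the open dense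
sets `l ≠ 0` and `y₄ ≠ 0`. Density passes through both maps in either direction.
-/

open Matrix

theorem OpenPartialHomeomorph.dense_image {X Y : Type*} [TopologicalSpace X] [TopologicalSpace Y]
    (e : OpenPartialHomeomorph X Y) (ht : Dense e.target) {S : Set X} (hd : Dense S) :
    Dense (e '' S) := by
  refine dense_closure.mp (ht.mono fun y hy => ?_)
  rw [← e.right_inv hy]
  exact (e.continuousAt (e.map_target hy)).continuousWithinAt.mem_closure_image (hd _)

theorem OpenPartialHomeomorph.dense_image_iff {X Y : Type*} [TopologicalSpace X]
    [TopologicalSpace Y] (e : OpenPartialHomeomorph X Y) (hs : Dense e.source)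
    (ht : Dense e.target) {S : Set X} (hS : S ⊆ e.source) : Dense (e '' S) ↔ Dense S := by
  refine ⟨fun hd => ?_, e.dense_image ht⟩
  rw [← e.symm_image_image_of_subset_source hS]
  exact e.symm.dense_image hs hd

theorem Matrix.dense_image_mulVec_iff {n R : Type*} [Fintype n] [DecidableEq n] [CommRing R]
    [TopologicalSpace R] [IsTopologicalRing R] {M : Matrix n n R} (hM : IsUnit M)
    {S : Set (n → R)} : Dense ((M *ᵥ ·) '' S) ↔ Dense S :=
  have hdet := M.isUnit_iff_isUnit_det.mp hM
  let h : (n → R) ≃ₜ (n → R) :=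
    { toFun := (M *ᵥ ·)
      invFun := (M⁻¹ *ᵥ ·)
      left_inv := fun v => by simp [mulVec_mulVec, nonsing_inv_mul _ hdet]
      right_inv := fun v => by simp [mulVec_mulVec, mul_nonsing_inv _ hdet] }
  h.isDenseEmbedding.dense_image

namespace Toeplitz4

section Algebra

variable {K : Type*} [Field K]

def toeplitz (c : Fin 4 → K) : Matrix (Fin 4) (Fin 4) K :=
  !![c 0, c 1, c 2, c 3; 0, c 0, c 1, c 2; 0, 0, c 0, c 1; 0, 0, 0, c 0]

theorem toeplitz_mulVec_comm (c d : Fin 4 → K) :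
    toeplitz c *ᵥ (d ∘ Fin.rev) = toeplitz d *ᵥ (c ∘ Fin.rev) := by
  ext i
  fin_cases i <;> simp [toeplitz, mulVec, dotProduct, Fin.sum_univ_four] <;> ring

theorem toeplitz_mulVec_apply_three (c v : Fin 4 → K) : (toeplitz c *ᵥ v) 3 = c 0 * v 3 := by
  simp [toeplitz, mulVec, dotProduct, Fin.sum_univ_four]

/-- `l • exp (t₁ N + t₂ N² + t₃ N³)`, where `N` is the nilpotent shift. -/
def expForm (l t₁ t₂ t₃ : K) : Matrix (Fin 4) (Fin 4) K :=
  toeplitz ![l, l * t₁, l * (t₂ + t₁ ^ 2 / 2), l * (t₃ + t₁ * t₂ + t₁ ^ 3 / 6)]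

theorem expForm_one : expForm (1 : K) 0 0 0 = 1 := by
  ext i j
  fin_cases i <;> fin_cases j <;> simp [expForm, toeplitz, one_apply]

/-- The last column of `expForm (w 3) (w 2) (w 1) (w 0)`. -/
def expColumn (w : Fin 4 → K) : Fin 4 → K :=
  ![w 3 * (w 0 + w 2 * w 1 + w 2 ^ 3 / 6), w 3 * (w 1 + w 2 ^ 2 / 2), w 3 * w 2, w 3]

theorem expForm_mulVec (w x : Fin 4 → K) :
    expForm (w 3) (w 2) (w 1) (w 0) *ᵥ x = toeplitz (x ∘ Fin.rev) *ᵥ expColumn w := by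
  conv_lhs => rw [← Function.comp_id x, ← Fin.rev_involutive.comp_self, ← Function.comp_assoc]
  rw [expForm, toeplitz_mulVec_comm]
  congr 1
  ext i
  fin_cases i <;> rfl

variable [CharZero K]

theorem expForm_mul (l t₁ t₂ t₃ m s₁ s₂ s₃ : K) :
    expForm l t₁ t₂ t₃ * expForm m s₁ s₂ s₃ = expForm (l * m) (t₁ + s₁) (t₂ + s₂) (t₃ + s₃) := by
  ext i j
  fin_cases i <;> fin_cases j <;> simp [expForm, toeplitz, mul_apply, Fin.sum_univ_four] <;> ring

theorem expForm_pow (l t₁ t₂ t₃ : K) (k : ℕ) :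
    expForm l t₁ t₂ t₃ ^ k = expForm (l ^ k) (k * t₁) (k * t₂) (k * t₃) := by
  induction k with
  | zero => simp [expForm_one]
  | succ k ih => rw [pow_succ, ih, expForm_mul]; push_cast; ring_nf

theorem toeplitz_eq_expForm (c : Fin 4 → K) (h : c 0 ≠ 0) :
    toeplitz c = expForm (c 0) (c 1 / c 0) (c 2 / c 0 - 1 / 2 * c 1 ^ 2 / c 0 ^ 2)
      (c 3 / c 0 - c 1 * c 2 / c 0 ^ 2 + 1 / 3 * c 1 ^ 3 / c 0 ^ 3) := by
  ext i j
  fin_cases i <;> fin_cases j <;> simp [expForm, toeplitz] <;> field_simp <;> ring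

theorem isUnit_expForm {l : K} (h : l ≠ 0) (t₁ t₂ t₃ : K) : IsUnit (expForm l t₁ t₂ t₃) := by
  refine IsUnit.of_mul_eq_one (expForm l⁻¹ (-t₁) (-t₂) (-t₃)) ?_
  rw [expForm_mul, mul_inv_cancel₀ h, add_neg_cancel, add_neg_cancel, add_neg_cancel, expForm_one]

theorem isUnit_toeplitz {c : Fin 4 → K} (h : c 0 ≠ 0) : IsUnit (toeplitz c) := by
  rw [toeplitz_eq_expForm c h]
  exact isUnit_expForm h _ _ _

def logCoords (a : Fin 4 → Fin 4 → K) (k : Fin 4 → ℕ) : Fin 4 → K :=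
  ![∑ j : Fin 4, (k j : K) *
      (a j 3 / a j 0 - a j 1 * a j 2 / (a j 0)^2 + (1/3) * (a j 1)^3 / (a j 0)^3),
    ∑ j : Fin 4, (k j : K) * (a j 2 / a j 0 - (1/2) * (a j 1)^2 / (a j 0)^2),
    ∑ j : Fin 4, (k j : K) * (a j 1 / a j 0),
    ∏ j : Fin 4, a j 0 ^ k j]

theorem prod_toeplitz_pow {a : Fin 4 → Fin 4 → K} (ha : ∀ j, a j 0 ≠ 0) (k : Fin 4 → ℕ) :
    toeplitz (a 0) ^ k 0 * toeplitz (a 1) ^ k 1 * toeplitz (a 2) ^ k 2 * toeplitz (a 3) ^ k 3 =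
      expForm (logCoords a k 3) (logCoords a k 2) (logCoords a k 1) (logCoords a k 0) := by
  simp only [toeplitz_eq_expForm _ (ha _), expForm_pow, expForm_mul]
  congr 1 <;> simp [logCoords, Fin.sum_univ_four, Fin.prod_univ_four]

def orbit (a : Fin 4 → Fin 4 → K) (x : Fin 4 → K) : Set (Fin 4 → K) :=
  {y | ∃ k : Fin 4 → ℕ, y =
    (toeplitz (a 0) ^ k 0 * toeplitz (a 1) ^ k 1 * toeplitz (a 2) ^ k 2 * toeplitz (a 3) ^ k 3) *ᵥ x}

theorem orbit_eq_image {a : Fin 4 → Fin 4 → K} (ha : ∀ j, a j 0 ≠ 0) (x : Fin 4 → K) :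
    orbit a x = (toeplitz (x ∘ Fin.rev) *ᵥ ·) '' (expColumn '' {v | ∃ k, v = logCoords a k}) := by
  simp only [orbit, prod_toeplitz_pow ha, expForm_mulVec, Set.image_image]
  ext y
  simp [eq_comm]

end Algebra

section Topology

variable {K : Type*} [NontriviallyNormedField K]

theorem dense_setOf_apply_ne_zero {ι : Type*} (i : ι) : Dense {w : ι → K | w i ≠ 0} :=
  (dense_compl_singleton (0 : K)).preimage (isOpenMap_eval i)

theorem isOpen_setOf_apply_ne_zero {ι : Type*} (i : ι) : IsOpen {w : ι → K | w i ≠ 0} :=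
  isOpen_ne_fun (continuous_apply i) continuous_const

variable [CharZero K]

def expColumnPartialHomeomorph : OpenPartialHomeomorph (Fin 4 → K) (Fin 4 → K) where
  toFun := expColumn
  invFun y := ![y 0 / y 3 - y 1 * y 2 / y 3 ^ 2 + 1 / 3 * y 2 ^ 3 / y 3 ^ 3,
    y 1 / y 3 - 1 / 2 * y 2 ^ 2 / y 3 ^ 2, y 2 / y 3, y 3]
  source := {w | w 3 ≠ 0}
  target := {y | y 3 ≠ 0}
  map_source' _ h := h
  map_target' _ h := h
  left_inv' w (h : w 3 ≠ 0) := by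
    ext i; fin_cases i <;> simp [expColumn] <;> field_simp <;> ring
  right_inv' y (h : y 3 ≠ 0) := by
    ext i; fin_cases i <;> simp [expColumn] <;> field_simp <;> ring
  open_source := isOpen_setOf_apply_ne_zero 3
  open_target := isOpen_setOf_apply_ne_zero 3
  continuousOn_toFun := by unfold expColumn; fun_prop
  continuousOn_invFun := by
    refine continuousOn_pi.mpr fun i => ?_
    fin_cases i <;> fun_prop (disch := intro _ h; simp_all)

theorem dense_image_expColumn_iff {S : Set (Fin 4 → K)} (hS : S ⊆ {w | w 3 ≠ 0}) :
    Dense (expColumn '' S) ↔ Dense S :=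
  expColumnPartialHomeomorph.dense_image_iff (dense_setOf_apply_ne_zero 3)
    (dense_setOf_apply_ne_zero 3) hS

theorem dense_orbit_iff {a : Fin 4 → Fin 4 → K} (ha : ∀ j, a j 0 ≠ 0) {x : Fin 4 → K}
    (hx : x 3 ≠ 0) : Dense (orbit a x) ↔ Dense {v | ∃ k, v = logCoords a k} := by
  have hW : {v | ∃ k, v = logCoords a k} ⊆ {w | w 3 ≠ 0} := by
    rintro _ ⟨k, rfl⟩
    simp [logCoords, Finset.prod_ne_zero_iff, ha]
  rw [orbit_eq_image ha, dense_image_mulVec_iff (isUnit_toeplitz hx), dense_image_expColumn_iff hW]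

theorem apply_three_ne_zero_of_dense_orbit {a : Fin 4 → Fin 4 → K} (ha : ∀ j, a j 0 ≠ 0)
    {x : Fin 4 → K} (hx : Dense (orbit a x)) : x 3 ≠ 0 := by
  intro h0
  have hsub : orbit a x ⊆ {y | y 3 = 0} := by
    rw [orbit_eq_image ha]
    rintro _ ⟨_, _, rfl⟩
    simp [toeplitz_mulVec_apply_three, h0]
  have hclosed : IsClosed {y : Fin 4 → K | y 3 = 0} :=
    isClosed_eq (continuous_apply 3) continuous_const
  simpa using hclosed.closure_subset_iff.mpr hsub (hx (Pi.single 3 1))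

end Topology

end Toeplitz4

open Toeplitz4

theorem toeplitz4_hypercyclic_iff
    (a : Fin 4 → Fin 4 → ℂ) (ha : ∀ j, a j 0 ≠ 0) :
    (∃ x : Fin 4 → ℂ, Dense {y : Fin 4 → ℂ | ∃ k : Fin 4 → ℕ,
        y = ((!![a 0 0, a 0 1, a 0 2, a 0 3; 0, a 0 0, a 0 1, a 0 2;
                 0, 0, a 0 0, a 0 1; 0, 0, 0, a 0 0]) ^ k 0 *
             (!![a 1 0, a 1 1, a 1 2, a 1 3; 0, a 1 0, a 1 1, a 1 2;
                 0, 0, a 1 0, a 1 1; 0, 0, 0, a 1 0]) ^ k 1 *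
             (!![a 2 0, a 2 1, a 2 2, a 2 3; 0, a 2 0, a 2 1, a 2 2;
                 0, 0, a 2 0, a 2 1; 0, 0, 0, a 2 0]) ^ k 2 *
             (!![a 3 0, a 3 1, a 3 2, a 3 3; 0, a 3 0, a 3 1, a 3 2;
                 0, 0, a 3 0, a 3 1; 0, 0, 0, a 3 0]) ^ k 3).mulVec x})
    ↔ Dense {v : Fin 4 → ℂ | ∃ k : Fin 4 → ℕ,
        v = ![∑ j : Fin 4, (k j : ℂ) *
                (a j 3 / a j 0 - a j 1 * a j 2 / (a j 0)^2 + (1/3) * (a j 1)^3 / (a j 0)^3),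
              ∑ j : Fin 4, (k j : ℂ) * (a j 2 / a j 0 - (1/2) * (a j 1)^2 / (a j 0)^2),
              ∑ j : Fin 4, (k j : ℂ) * (a j 1 / a j 0),
              ∏ j : Fin 4, a j 0 ^ k j]} := by
  change (∃ x, Dense (orbit a x)) ↔ Dense {v | ∃ k, v = logCoords a k}
  constructor
  · rintro ⟨x, hx⟩
    exact (dense_orbit_iff ha (apply_three_ne_zero_of_dense_orbit ha hx)).1 hx
  · intro h
    exact ⟨Pi.single 3 1, (dense_orbit_iff ha (by simp)).2 h⟩
end

section
/- No 4-tuple (A_1, A_2, A_3, A_4) of 4×4 upper triangular Toeplitz complex matrices is hypercyclic on ℂ⁴. -/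
/-!
Upper triangular Toeplitz `4 × 4` matrices form the commutative algebra `ℂ[t]/(t⁴)`, and on its
units the truncated logarithm `c ↦ log (c / c₀) mod t³` is a homomorphism onto `(ℂ², +) ≅ ℝ⁴`.
For `y = M x` with `y 3 ≠ 0` this logarithm of `M` is read off continuously from the last three
coordinates of `y`, and every value in `ℂ²` occurs. Hence a dense orbit of the semigroup generated
by four such matrices would make the `ℕ`-combinations of four vectors dense in `ℝ⁴`; but four
vectors either span a proper subspace or are a basis, whose `ℤ`-span is a discrete lattice.
-/

open Set Submodule Module Matrix

noncomputable section

theorem Dense.image_inter_of_continuousOn {X Y : Type*} [TopologicalSpace X] [TopologicalSpace Y]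
    {s U : Set X} {f : X → Y} (hs : Dense s) (hU : IsOpen U) (hf : ContinuousOn f U)
    (hfU : Dense (f '' U)) : Dense (f '' (U ∩ s)) := by
  refine dense_closure.mp (hfU.mono ?_)
  rintro _ ⟨y, hy, rfl⟩
  exact (hf.continuousAt (hU.mem_nhds hy)).continuousWithinAt.mem_closure_image
    (hs.open_subset_closure_inter hU hy)

theorem not_dense_span_int_of_card_le_finrank {ι E : Type*} [Fintype ι]
    [NormedAddCommGroup E] [NormedSpace ℝ E] [FiniteDimensional ℝ E] [Nontrivial E]
    (w : ι → E) (hcard : Fintype.card ι ≤ finrank ℝ E) :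
    ¬ Dense (span ℤ (range w) : Set E) := by
  intro hD
  have hspan : span ℝ (range w) = ⊤ := by
    have hsub : (span ℤ (range w) : Set E) ⊆ span ℝ (range w) :=
      span_le_restrictScalars ℤ ℝ (range w)
    refine eq_top_iff'.mpr fun v => ?_
    have := (Submodule.closed_of_finiteDimensional (span ℝ (range w))).closure_subset_iff.mpr hsub
    exact this (hD.closure_eq ▸ mem_univ v)
  have hcard_eq : Fintype.card ι = finrank ℝ E := by
    refine le_antisymm hcard ?_
    have := finrank_range_le_card (R := ℝ) w
    rwa [Set.finrank, hspan, finrank_top] at this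
  have hli : LinearIndependent ℝ w :=
    linearIndependent_of_top_le_span_of_card_eq_finrank hspan.ge hcard_eq
  let b := Basis.mk hli hspan.ge
  have hclosed : IsClosed (span ℤ (range b) : Set E) :=
    AddSubgroup.isClosed_of_discrete (H := (span ℤ (range b)).toAddSubgroup)
  obtain ⟨i⟩ : Nonempty ι := Fintype.card_pos_iff.mp (hcard_eq ▸ finrank_pos)
  have hhalf : (2⁻¹ : ℝ) • b i ∈ span ℤ (range b) := by
    rw [← SetLike.mem_coe, ← hclosed.closure_eq, Basis.coe_mk, hD.closure_eq]; trivial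
  obtain ⟨m, hm⟩ := (b.mem_span_iff_repr_mem ℤ _).mp hhalf i
  simp only [algebraMap_int_eq, eq_intCast, map_smul, Basis.repr_self, Finsupp.smul_single,
    smul_eq_mul, mul_one, Finsupp.single_eq_same] at hm
  have h2m : 2 * m = 1 := by exact_mod_cast (show (2 * m : ℝ) = 1 by rw [hm]; norm_num)
  omega

def upperToeplitz (c : Fin 4 → ℂ) : Matrix (Fin 4) (Fin 4) ℂ :=
  !![c 0, c 1, c 2, c 3; 0, c 0, c 1, c 2; 0, 0, c 0, c 1; 0, 0, 0, c 0]

theorem upperToeplitz_mul (c d : Fin 4 → ℂ) :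
    upperToeplitz c * upperToeplitz d =
      upperToeplitz ![c 0 * d 0, c 0 * d 1 + c 1 * d 0, c 0 * d 2 + c 1 * d 1 + c 2 * d 0,
        c 0 * d 3 + c 1 * d 2 + c 2 * d 1 + c 3 * d 0] := by
  ext i j
  fin_cases i <;> fin_cases j <;>
    simp [upperToeplitz, mul_apply, Fin.sum_univ_four]

def upperToeplitzSubmonoid : Submonoid (Matrix (Fin 4) (Fin 4) ℂ) where
  carrier := range upperToeplitz
  mul_mem' := by
    rintro _ _ ⟨c, rfl⟩ ⟨d, rfl⟩
    exact ⟨_, (upperToeplitz_mul c d).symm⟩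
  one_mem' := ⟨![1, 0, 0, 0], by
    ext i j
    fin_cases i <;> fin_cases j <;> simp [upperToeplitz, one_apply]⟩

/-- The coefficients of `t` and `t²` in `log (1 + (c₁ / c₀) t + (c₂ / c₀) t²)`. -/
def truncLog (c₀ c₁ c₂ : ℂ) : ℂ × ℂ :=
  (c₁ / c₀, c₂ / c₀ - (c₁ / c₀) ^ 2 / 2)

theorem truncLog_mul {c₀ d₀ : ℂ} (hc : c₀ ≠ 0) (hd : d₀ ≠ 0) (c₁ c₂ d₁ d₂ : ℂ) :
    truncLog (c₀ * d₀) (c₀ * d₁ + c₁ * d₀) (c₀ * d₂ + c₁ * d₁ + c₂ * d₀) =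
      truncLog c₀ c₁ c₂ + truncLog d₀ d₁ d₂ := by
  simp only [truncLog, Prod.mk_add_mk, Prod.mk.injEq]
  constructor <;> field_simp <;> ring

def toeplitzLog (M : Matrix (Fin 4) (Fin 4) ℂ) : ℂ × ℂ :=
  truncLog (M 3 3) (M 2 3) (M 1 3)

section

variable {M N : Matrix (Fin 4) (Fin 4) ℂ}

theorem mul_apply_three_three_of_mem (hM : M ∈ upperToeplitzSubmonoid)
    (hN : N ∈ upperToeplitzSubmonoid) :
    (M * N) 3 3 = M 3 3 * N 3 3 := by
  obtain ⟨⟨c, rfl⟩, ⟨d, rfl⟩⟩ := And.intro hM hN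
  simp [upperToeplitz]

theorem mulVec_apply_three_of_mem (hM : M ∈ upperToeplitzSubmonoid) (x : Fin 4 → ℂ) :
    (M *ᵥ x) 3 = M 3 3 * x 3 := by
  obtain ⟨c, rfl⟩ := hM
  simp [upperToeplitz, mulVec, dotProduct, Fin.sum_univ_four]

theorem toeplitzLog_mul (hM : M ∈ upperToeplitzSubmonoid) (hN : N ∈ upperToeplitzSubmonoid)
    (h : (M * N) 3 3 ≠ 0) : toeplitzLog (M * N) = toeplitzLog M + toeplitzLog N := by
  rw [mul_apply_three_three_of_mem hM hN] at h
  obtain ⟨⟨c, rfl⟩, ⟨d, rfl⟩⟩ := And.intro hM hN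
  have := truncLog_mul (left_ne_zero_of_mul h) (right_ne_zero_of_mul h) (c 1) (c 2) (d 1) (d 2)
  simpa [toeplitzLog, upperToeplitz_mul, upperToeplitz, add_assoc] using this

theorem toeplitzLog_list_prod {l : List (Matrix (Fin 4) (Fin 4) ℂ)}
    (hl : ∀ M ∈ l, M ∈ upperToeplitzSubmonoid) (h : l.prod 3 3 ≠ 0) :
    toeplitzLog l.prod = (l.map toeplitzLog).sum := by
  induction l with
  | nil => simp [toeplitzLog, truncLog]
  | cons M l ih =>
    have hM := hl M List.mem_cons_self
    have hl' : ∀ N ∈ l, N ∈ upperToeplitzSubmonoid := fun N hN => hl N (List.mem_cons_of_mem M hN)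
    have hprod := list_prod_mem hl'
    rw [List.prod_cons] at h ⊢
    rw [toeplitzLog_mul hM hprod h, List.map_cons, List.sum_cons,
      ih hl' (right_ne_zero_of_mul (mul_apply_three_three_of_mem hM hprod ▸ h))]

theorem toeplitzLog_prod_pow {n : ℕ} {A : Fin n → Matrix (Fin 4) (Fin 4) ℂ}
    (hA : ∀ i, A i ∈ upperToeplitzSubmonoid) (k : Fin n → ℕ)
    (h : (List.ofFn fun i => A i ^ k i).prod 3 3 ≠ 0) :
    toeplitzLog (List.ofFn fun i => A i ^ k i).prod = ∑ i, k i • toeplitzLog (A i) := by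
  have hflat : (List.ofFn fun i => A i ^ k i).prod =
      (List.ofFn fun i => List.replicate (k i) (A i)).flatten.prod := by
    simp [List.prod_flatten, List.map_ofFn, Function.comp_def]
  rw [hflat] at h ⊢
  rw [toeplitzLog_list_prod _ h]
  · simp [List.map_flatten, List.sum_flatten, List.map_ofFn, Function.comp_def, List.sum_ofFn]
  · simp only [List.mem_flatten, List.mem_ofFn]
    rintro M ⟨_, ⟨i, rfl⟩, hM⟩
    exact List.eq_of_mem_replicate hM ▸ hA i

end

/-- `truncLog` of the quotient `y / x` in `ℂ[t]/(t³)`, where a vector `v` stands for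
`v 3 + v 2 t + v 1 t²`: this recovers `toeplitzLog M` from `y = M x`. -/
def logQuotient (x y : Fin 4 → ℂ) : ℂ × ℂ :=
  let q₀ := y 3 / x 3
  let q₁ := (y 2 - q₀ * x 2) / x 3
  truncLog q₀ q₁ ((y 1 - q₀ * x 1 - q₁ * x 2) / x 3)

section

variable {x : Fin 4 → ℂ}

theorem logQuotient_mulVec {M : Matrix (Fin 4) (Fin 4) ℂ} (hM : M ∈ upperToeplitzSubmonoid)
    (hx : x 3 ≠ 0) : logQuotient x (M *ᵥ x) = toeplitzLog M := by
  obtain ⟨c, rfl⟩ := hM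
  simp only [logQuotient, toeplitzLog, upperToeplitz, mulVec, dotProduct, Fin.sum_univ_four]
  simp only [of_apply, cons_val', cons_val_zero, cons_val_fin_one, cons_val, cons_val_one,
    zero_mul, add_zero, zero_add]
  rw [mul_div_cancel_right₀ _ hx]
  congr 1 <;> field_simp <;> ring

theorem continuousOn_logQuotient (hx : x 3 ≠ 0) :
    ContinuousOn (logQuotient x) {y | y 3 ≠ 0} := by
  intro y hy
  have hq₀ : y 3 / x 3 ≠ 0 := div_ne_zero hy hx
  unfold logQuotient truncLog
  apply ContinuousAt.continuousWithinAt
  fun_prop (disch := exact hq₀)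

theorem image_logQuotient (hx : x 3 ≠ 0) : logQuotient x '' {y | y 3 ≠ 0} = univ := by
  refine eq_univ_of_forall fun ⟨u, v⟩ => ⟨upperToeplitz ![1, u, v + u ^ 2 / 2, 0] *ᵥ x, ?_, ?_⟩
  · rw [mem_ofPred_eq, mulVec_apply_three_of_mem ⟨_, rfl⟩]
    simpa [upperToeplitz] using hx
  · rw [logQuotient_mulVec ⟨_, rfl⟩ hx]
    simp [toeplitzLog, upperToeplitz, truncLog]

end

theorem not_dense_toeplitz_orbit {n : ℕ} (hn : n ≤ 4) {A : Fin n → Matrix (Fin 4) (Fin 4) ℂ}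
    (hA : ∀ i, A i ∈ upperToeplitzSubmonoid) (x : Fin 4 → ℂ) :
    ¬ Dense {y | ∃ k : Fin n → ℕ, y = (List.ofFn fun i => A i ^ k i).prod *ᵥ x} := by
  intro hD
  have hP : ∀ k : Fin n → ℕ, (List.ofFn fun i => A i ^ k i).prod ∈ upperToeplitzSubmonoid :=
    fun k => list_prod_mem (by simp [pow_mem (hA _)])
  have hU : IsOpen {y : Fin 4 → ℂ | y 3 ≠ 0} := isOpen_ne_fun (continuous_apply 3) continuous_const
  obtain ⟨_, hy₀, k₀, rfl⟩ := hD.inter_open_nonempty _ hU ⟨1, one_ne_zero⟩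
  rw [mem_ofPred_eq, mulVec_apply_three_of_mem (hP k₀)] at hy₀
  have hx : x 3 ≠ 0 := right_ne_zero_of_mul hy₀
  refine not_dense_span_int_of_card_le_finrank (fun i => toeplitzLog (A i)) ?_ ?_
  · simpa [finrank_prod] using hn
  refine (hD.image_inter_of_continuousOn hU (continuousOn_logQuotient hx)
    (image_logQuotient hx ▸ dense_univ)).mono ?_
  rintro _ ⟨_, ⟨hy, k, rfl⟩, rfl⟩
  rw [mem_ofPred_eq, mulVec_apply_three_of_mem (hP k)] at hy
  rw [logQuotient_mulVec (hP k) hx, toeplitzLog_prod_pow hA k (left_ne_zero_of_mul hy)]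
  exact sum_mem fun i _ => nsmul_mem (subset_span (mem_range_self i)) _

end

theorem toeplitz4_not_hypercyclic
    (a : Fin 4 → Fin 4 → ℂ) (x : Fin 4 → ℂ) :
    ¬ Dense {y : Fin 4 → ℂ | ∃ k : Fin 4 → ℕ,
        y = ((!![a 0 0, a 0 1, a 0 2, a 0 3; 0, a 0 0, a 0 1, a 0 2;
                 0, 0, a 0 0, a 0 1; 0, 0, 0, a 0 0]) ^ k 0 *
             (!![a 1 0, a 1 1, a 1 2, a 1 3; 0, a 1 0, a 1 1, a 1 2;
                 0, 0, a 1 0, a 1 1; 0, 0, 0, a 1 0]) ^ k 1 *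
             (!![a 2 0, a 2 1, a 2 2, a 2 3; 0, a 2 0, a 2 1, a 2 2;
                 0, 0, a 2 0, a 2 1; 0, 0, 0, a 2 0]) ^ k 2 *
             (!![a 3 0, a 3 1, a 3 2, a 3 3; 0, a 3 0, a 3 1, a 3 2;
                 0, 0, a 3 0, a 3 1; 0, 0, 0, a 3 0]) ^ k 3).mulVec x} := by
  set A : Fin 4 → Matrix (Fin 4) (Fin 4) ℂ := fun i => upperToeplitz (a i)
  have hprod : ∀ k : Fin 4 → ℕ, A 0 ^ k 0 * A 1 ^ k 1 * A 2 ^ k 2 * A 3 ^ k 3 =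
      (List.ofFn fun i => A i ^ k i).prod := by
    simp [List.ofFn_succ, mul_assoc]
  change ¬ Dense {y | ∃ k : Fin 4 → ℕ, y = (A 0 ^ k 0 * A 1 ^ k 1 * A 2 ^ k 2 * A 3 ^ k 3) *ᵥ x}
  simp_rw [hprod]
  exact not_dense_toeplitz_orbit le_rfl (fun i => ⟨a i, rfl⟩) x
end
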